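/- arXiv:1909.13370 — 2 statements merged into one kernel-verified Lean document; each statement's English description precedes it below -/
import Mathlib

section
/- Let N be a finite group of characteristic p, meaning C_N(O_p(N)) ≤ O_p(N), and let S be a Sylow p-subgroup of N. If α is an automorphism of N that restricts to the identity on S, then α is conjugation by an element of Z(S). -/
open Subgroup

/-- The `p`-core of a group: the join of all normal `p`-subgroups
(which is the largest normal `p`-subgroup). -/
def pCore (p : ℕ) (G : Type*) [Group G] : Subgroup G :=
  ⨆ (N : Subgroup G) (_ : N.Normal ∧ IsPGroup p N), N

/-!
Set `Q = O_p(N)`, so `Q ≤ S`. Since `α` fixes `Q` pointwise, `c y = α(y) y⁻¹` centralizes `Q`,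
so `c` takes values in `A = C_N(Q)`, which is an abelian `p`-group because `A ≤ Q`. The map `c`
is a crossed homomorphism for the conjugation action of `N` on `A`, trivial on `S`. Multiplying
its values over the cosets `N / S` gives `z` with `c(y)^[N:S] = z (y z y⁻¹)⁻¹`, and as `[N:S]` is
prime to `|A|` we may extract an `[N:S]`-th root `w` of `z`: then `c(y) = w (y w y⁻¹)⁻¹`, i.e.
`α` is conjugation by `w ∈ A ≤ S`, and `w` centralizes `S` because `α` fixes `S`.
-/

section pCore

variable {p : ℕ} {G : Type*} [Group G]

theorem pCore_normal : (pCore p G).Normal :=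
  biSup_normal {N : Subgroup G | N.Normal ∧ IsPGroup p N} id fun _ hN => hN.1

theorem pCore_le_sylow [Fact p.Prime] (S : Sylow p G) : pCore p G ≤ S :=
  iSup₂_le fun _ hK => haveI := hK.1; hK.2.le_sylow_of_normal S

end pCore

theorem isMulCommutative_centralizer_of_le {G : Type*} [Group G] {H : Subgroup G}
    (h : centralizer (H : Set G) ≤ H) : IsMulCommutative (centralizer (H : Set G)) :=
  IsMulCommutative.of_setLike_mul_comm fun _ ha _ hb => (mem_centralizer_iff.mp ha _ (h hb)).symm

theorem mul_inv_mem_centralizer_of_forall_mem_eq {G : Type*} [Group G] {Q : Subgroup G}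
    [Q.Normal] {α : MulAut G} (hα : ∀ q ∈ Q, α q = q) (y : G) :
    α y * y⁻¹ ∈ centralizer (Q : Set G) := by
  refine mem_centralizer_iff.mpr fun q hq => ?_
  have hconj : (α y)⁻¹ * q * α y = y⁻¹ * q * y := by
    have := hα _ (by simpa using Normal.conj_mem ‹_› q hq y⁻¹)
    rwa [map_mul, map_mul, map_inv, hα q hq] at this
  calc q * (α y * y⁻¹) = α y * ((α y)⁻¹ * q * α y) * y⁻¹ := by group
    _ = α y * y⁻¹ * q := by rw [hconj]; group

section CrossedHom

variable {G A : Type*} [Group G] [CommGroup A]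

def IsCrossedHom (φ : G →* MulAut A) (c : G → A) : Prop :=
  ∀ x y, c (x * y) = c x * φ x (c y)

namespace IsCrossedHom

variable {φ : G →* MulAut A} {c : G → A}

theorem eq_of_inv_mul_mem (hc : IsCrossedHom φ c) {H : Subgroup G} (hH : ∀ h ∈ H, c h = 1)
    {x y : G} (hxy : x⁻¹ * y ∈ H) : c x = c y := by
  rw [← mul_inv_cancel_left x y, hc, hH _ hxy, map_one, mul_one]

theorem exists_pow_index_eq_mul_inv (hc : IsCrossedHom φ c) (H : Subgroup G) [H.FiniteIndex]
    (hH : ∀ h ∈ H, c h = 1) : ∃ z : A, ∀ y, c y ^ H.index = z * (φ y z)⁻¹ := by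
  let _ : Fintype (G ⧸ H) := Fintype.ofFinite _
  let f : G ⧸ H → A := fun u =>
    u.liftOn' c fun _ _ h => hc.eq_of_inv_mul_mem hH (QuotientGroup.leftRel_apply.mp h)
  refine ⟨∏ u, f u, fun y => ?_⟩
  have hshift : ∀ u, φ y (f u) = (c y)⁻¹ * f (y • u) := by
    intro u
    induction u using QuotientGroup.induction_on with | H x => ?_
    show φ y (c x) = (c y)⁻¹ * c (y * x)
    rw [hc, inv_mul_cancel_left]
  have hperm : ∏ u, f (y • u) = ∏ u, f u := Equiv.prod_comp (MulAction.toPerm y) f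
  rw [map_prod, Finset.prod_congr rfl fun u _ => hshift u, Finset.prod_mul_distrib,
    Finset.prod_const, Finset.card_univ, ← Nat.card_eq_fintype_card, ← index_eq_card,
    hperm]
  group

theorem exists_eq_mul_inv_of_coprime (hc : IsCrossedHom φ c) (H : Subgroup G) [H.FiniteIndex]
    (hH : ∀ h ∈ H, c h = 1) (hcop : (Nat.card A).Coprime H.index) :
    ∃ w : A, ∀ y, c y = w * (φ y w)⁻¹ := by
  obtain ⟨z, hz⟩ := hc.exists_pow_index_eq_mul_inv H hH
  obtain ⟨w, rfl⟩ := (powCoprime hcop).surjective z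
  refine ⟨w, fun y => (powCoprime hcop).injective ?_⟩
  simp only [powCoprime_apply] at hz ⊢
  rw [hz, mul_pow, inv_pow, map_pow]

end IsCrossedHom

end CrossedHom

open scoped IsMulCommutative in
/-- If `N` is a finite group of characteristic `p`
(`C_N(O_p(N)) ≤ O_p(N)`), `S` is a Sylow `p`-subgroup of `N`, and `α` is an
automorphism of `N` restricting to the identity on `S`, then `α` is conjugation by
an element of `Z(S)`. -/
theorem stmt4 (p : ℕ) [Fact p.Prime] (N : Type) [Group N] [Finite N]
    (hchar : Subgroup.centralizer (pCore p N : Set N) ≤ pCore p N)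
    (S : Sylow p N) (α : MulAut N)
    (hα : ∀ s ∈ (S : Subgroup N), α s = s) :
    ∃ z ∈ (S : Subgroup N) ⊓ Subgroup.centralizer (S : Set N),
      ∀ x : N, α x = z * x * z⁻¹ := by
  have _ : (pCore p N).Normal := pCore_normal
  have hQS := pCore_le_sylow (G := N) S
  have := isMulCommutative_centralizer_of_le hchar
  let c : N → centralizer (pCore p N : Set N) := fun y =>
    ⟨α y * y⁻¹, mul_inv_mem_centralizer_of_forall_mem_eq (fun q hq => hα q (hQS hq)) y⟩
  have hc : IsCrossedHom MulAut.conjNormal c := fun x y => by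
    ext
    simp only [c, coe_mul, MulAut.conjNormal_apply, map_mul]
    group
  have hcS : ∀ s ∈ (S : Subgroup N), c s = 1 := fun s hs => by
    ext
    simp [c, hα s hs]
  have hcop : (Nat.card (centralizer (pCore p N : Set N))).Coprime S.index :=
    S.card_coprime_index.coprime_dvd_left (card_dvd_of_le (hchar.trans hQS))
  obtain ⟨w, hw⟩ := hc.exists_eq_mul_inv_of_coprime S hcS hcop
  have hαw : ∀ x, α x = w * x * (w : N)⁻¹ := fun x => by
    have := congrArg Subtype.val (hw x)
    simp only [c, coe_mul, coe_inv, MulAut.conjNormal_apply] at this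
    rw [mul_inv_eq_iff_eq_mul.mp this]
    group
  refine ⟨w, mem_inf.mpr ⟨hQS (hchar w.2), mem_centralizer_iff.mpr fun s hs => ?_⟩, hαw⟩
  exact eq_mul_inv_iff_mul_eq.mp ((hα s hs).symm.trans (hαw s))
end

section
/- Let S be a finite p-group, Q ≤ S, and T = N_S(Q). If J(Q) = J(T) (Thompson subgroups agree), then N_{Q·C_S(J(Q))}(Q) = Q; that is, Q is self-normalizing in Q·C_S(J(Q)). -/
open Subgroup

/-- The maximum of the orders of abelian subgroups of a group. -/
noncomputable def maxAbelianOrder (S : Type*) [Group S] : ℕ :=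
  sSup {n : ℕ | ∃ A : Subgroup S, IsMulCommutative A ∧ Nat.card A = n}

/-- The (abelian) Thompson subgroup: generated by the abelian subgroups of maximal order. -/
noncomputable def thompsonJ (S : Type*) [Group S] : Subgroup S :=
  ⨆ (A : Subgroup S) (_ : IsMulCommutative A ∧ Nat.card A = maxAbelianOrder S), A

/-!
Write `J = J(Q) = J(T)`. Since `J(T)` is characteristic in `T`, the group `T` normalizes `J`
and hence `C = C_S(J)`; in particular `QC` is a subgroup and Dedekind's law gives
`QC ∩ T = Q(C ∩ T)`. Finally `C ∩ T = C_T(J(T)) ≤ J(T) = J ≤ Q`, because a maximal abelian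
subgroup `A ≤ J(T)` together with an element centralizing it generates an abelian subgroup that
cannot be larger than `A`.
-/

namespace Subgroup

variable {G : Type*} [Group G]

theorem normalizer_le_normalizer_centralizer (s : Set G) :
    normalizer s ≤ normalizer (centralizer s : Set G) := by
  rw [le_normalizer_iff]
  intro g hg c hc
  rw [mem_centralizer_iff]
  intro h hh
  have hcomm : g⁻¹ * h * g * c = c * (g⁻¹ * h * g) :=
    mem_centralizer_iff.mp hc _ ((mem_set_normalizer_iff''.mp hg h).mp hh)
  calc h * (g * c * g⁻¹) = g * (g⁻¹ * h * g * c) * g⁻¹ := by group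
    _ = g * (c * (g⁻¹ * h * g)) * g⁻¹ := by rw [hcomm]
    _ = g * c * g⁻¹ * h := by group

theorem le_normalizer_map_subtype {H : Subgroup G} (K : Subgroup H) [K.Normal] :
    H ≤ normalizer (K.map H.subtype : Set G) := by
  have h := le_normalizer_map (H := K) H.subtype
  rwa [normalizer_eq_top, ← MonoidHom.range_eq_map, range_subtype] at h

theorem sup_inf_assoc_of_le_of_le_normalizer {A B C : Subgroup G} (hAC : A ≤ C)
    (hAB : A ≤ normalizer (B : Set G)) : (A ⊔ B) ⊓ C = A ⊔ B ⊓ C := by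
  have hABC : A ≤ normalizer ((B ⊓ C : Subgroup G) : Set G) :=
    (le_inf hAB (hAC.trans le_normalizer)).trans inf_normalizer_le_normalizer_inf
  apply SetLike.coe_injective
  rw [coe_inf, coe_mul_of_left_le_normalizer_right A B hAB, ← mul_inf_assoc A B C hAC,
    coe_mul_of_left_le_normalizer_right _ _ hABC]

end Subgroup

section Thompson

variable {G : Type*} [Group G]

theorem le_thompsonJ {A : Subgroup G} (hA : IsMulCommutative A)
    (hcard : Nat.card A = maxAbelianOrder G) : A ≤ thompsonJ G :=
  le_iSup_of_le A (le_iSup_of_le ⟨hA, hcard⟩ le_rfl)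

theorem bddAbove_abelianOrders [Finite G] :
    BddAbove {n : ℕ | ∃ A : Subgroup G, IsMulCommutative A ∧ Nat.card A = n} := by
  refine ⟨Nat.card G, ?_⟩
  rintro n ⟨A, -, rfl⟩
  exact A.card_le_card_group

theorem card_le_maxAbelianOrder [Finite G] (A : Subgroup G) [hA : IsMulCommutative A] :
    Nat.card A ≤ maxAbelianOrder G :=
  le_csSup bddAbove_abelianOrders ⟨A, hA, rfl⟩

theorem exists_isMulCommutative_card_eq_maxAbelianOrder [Finite G] :
    ∃ A : Subgroup G, IsMulCommutative A ∧ Nat.card A = maxAbelianOrder G :=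
  Nat.sSup_mem (s := {n : ℕ | ∃ A : Subgroup G, IsMulCommutative A ∧ Nat.card A = n})
    ⟨1, ⊥, inferInstance, card_bot⟩ bddAbove_abelianOrders

instance thompsonJ_characteristic : (thompsonJ G).Characteristic := by
  rw [characteristic_iff_map_le]
  intro ϕ
  simp only [thompsonJ, Subgroup.map_iSup]
  refine iSup₂_le fun A ⟨hA, hcard⟩ => ?_
  exact le_thompsonJ inferInstance (hcard ▸ card_map_of_injective ϕ.injective)

theorem centralizer_thompsonJ_le [Finite G] :
    centralizer (thompsonJ G : Set G) ≤ thompsonJ G := by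
  intro x hx
  obtain ⟨A, hA, hcard⟩ := exists_isMulCommutative_card_eq_maxAbelianOrder (G := G)
  have hAJ := le_thompsonJ hA hcard
  have hxA : zpowers x ≤ centralizer (A : Set G) :=
    zpowers_le.mpr (centralizer_le (s := (A : Set G)) hAJ hx)
  have hAx : IsMulCommutative (A ⊔ zpowers x : Subgroup G) := by
    rw [← le_centralizer_iff_isMulCommutative]
    refine sup_le (le_centralizer_iff.mp (sup_le (le_centralizer A) hxA)) ?_
    exact le_centralizer_iff.mp (sup_le (le_centralizer_iff.mp hxA) (le_centralizer _))
  have hA_eq : A = A ⊔ zpowers x :=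
    eq_of_le_of_card_ge le_sup_left (hcard ▸ card_le_maxAbelianOrder _)
  exact hAJ (hA_eq ▸ mem_sup_right (mem_zpowers x) : x ∈ A)

theorem centralizer_map_thompsonJ_inf_le (H : Subgroup G) [Finite H] :
    centralizer ((thompsonJ H).map H.subtype : Set G) ⊓ H ≤ (thompsonJ H).map H.subtype := by
  rintro x ⟨hxC, hxH⟩
  refine ⟨⟨x, hxH⟩, centralizer_thompsonJ_le ?_, rfl⟩
  rw [mem_centralizer_iff]
  intro u hu
  exact Subtype.ext (mem_centralizer_iff.mp hxC _ ⟨u, hu, rfl⟩)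

end Thompson

theorem stmt13_general (S : Type) [Group S] [Finite S]
    (Q : Subgroup S)
    (hJ : (thompsonJ Q).map Q.subtype = (thompsonJ (normalizer (Q : Set S))).map (normalizer (Q : Set S)).subtype) :
    (Q ⊔ Subgroup.centralizer (((thompsonJ Q).map Q.subtype : Subgroup S) : Set S))
        ⊓ (normalizer (Q : Set S)) = Q := by
  set T := normalizer (Q : Set S)
  set J := (thompsonJ Q).map Q.subtype
  have hTJ : T ≤ normalizer (J : Set S) := hJ ▸ le_normalizer_map_subtype (thompsonJ T)
  have hQC : Q ≤ normalizer (centralizer (J : Set S) : Set S) :=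
    le_normalizer.trans (hTJ.trans (normalizer_le_normalizer_centralizer _))
  have hCT : centralizer (J : Set S) ⊓ T ≤ Q :=
    (hJ ▸ centralizer_map_thompsonJ_inf_le T).trans (map_subtype_le _)
  rw [sup_inf_assoc_of_le_of_le_normalizer le_normalizer hQC, sup_eq_left.mpr hCT]

/-- Let `S` be a finite `p`-group, `Q ≤ S`, and `T = N_S(Q)`.  If
`J(Q) = J(T)` (as subgroups of `S`), then `N_{Q·C_S(J(Q))}(Q) = Q`. -/
theorem stmt13 (p : ℕ) [Fact p.Prime] (S : Type) [Group S] [Finite S]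
    (hS : IsPGroup p S) (Q : Subgroup S)
    (hJ : (thompsonJ Q).map Q.subtype = (thompsonJ (normalizer (Q : Set S))).map (normalizer (Q : Set S)).subtype) :
    (Q ⊔ Subgroup.centralizer (((thompsonJ Q).map Q.subtype : Subgroup S) : Set S))
        ⊓ (normalizer (Q : Set S)) = Q :=
  stmt13_general S Q hJ
end
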